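/- Let # : C × C → C be a guarded parametrized monad (each #(-,X) is a guarded monad and each #(-,f) is a guarded monad morphism for f : X → Y) such that for every X the final coalgebra F# X = νγ.#(X,γ) of #(X,-) exists. Then F# carries a monad structure (with unit and Kleisli lifting determined by finality as in Uustalu's construction), and it is a guarded monad when f : X → F# Y is declared σ-guarded iff out∘f : X → #(Y, F# Y) is σ-guarded. Moreover, if each monad #(-,X) is guarded iterative, then F# is guarded iterative. -/

import Mathlib

/-!
The Kleisli lifting `f*` of `F#` is read off from the coiteration of the coalgebra
`[f̂, #(Y, inr) ∘ out]` on `F# X + F# Y`, which is `[f*, id]`; uniqueness of coalgebra morphisms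
gives its characterizing equation, and with it the monad laws (`out` is mono by Lambek's lemma).
Guardedness transfers along `out` because `out ∘ u* ∘ f` is the Kleisli composite of
`#(id, u*) ∘ out ∘ f` with `out ∘ u`, and `#(id, u*)` preserves guardedness.

For iteration, let `s₀` solve `out ∘ f` in `#(-, F#(Y + X))` and let `h` be the coiteration of
`[η, s₀]* ∘ out`. Then `h ∘ f` solves `f`. Conversely, for any solution `s`, both `out ∘ s` and
`#(id, [η, s]*) ∘ s₀` solve the guarded equation `#(id, [η, s]*) ∘ out ∘ f` in `#(-, F# Y)`, so they
agree; this makes `[η, s]*` a coalgebra morphism out of `[η, s₀]* ∘ out`, hence `[η, s]* = h`.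
-/

open CategoryTheory CategoryTheory.Limits

universe v u

/-- `(σ, σ')` form a binary coproduct cospan. -/
def IsCoprodCospan {C : Type u} [Category.{v} C] {Y' Y'' Y : C}
    (σ : Y' ⟶ Y) (σ' : Y'' ⟶ Y) : Prop :=
  Nonempty (IsColimit (BinaryCofan.mk σ σ'))

/-- A guarded parametrized monad `# : C × C → C`: for each parameter `P`, a guarded
monad `#(-,P)` (in Kleisli-triple form, with a guardedness relation closed under
(trv), (par), (cmp)), and for each `p : P ⟶ Q` a guarded monad morphism
`#(id,p) : #(-,P) ⟶ #(-,Q)`. -/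
structure PGMonad (C : Type u) [Category.{v} C] where
  obj : C → C → C
  η : ∀ X P : C, X ⟶ obj X P
  bind : ∀ {X Y : C} (P : C), (X ⟶ obj Y P) → (obj X P ⟶ obj Y P)
  η_bind : ∀ {X Y : C} (P : C) (f : X ⟶ obj Y P), η X P ≫ bind P f = f
  bind_η : ∀ X P : C, bind P (η X P) = 𝟙 (obj X P)
  bind_comp : ∀ {X Y Z : C} (P : C) (f : X ⟶ obj Y P) (g : Y ⟶ obj Z P),
      bind P (f ≫ bind P g) = bind P f ≫ bind P g
  /-- Functorial action in the parameter. -/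
  pmap : ∀ (X : C) {P Q : C}, (P ⟶ Q) → (obj X P ⟶ obj X Q)
  pmap_id : ∀ X P : C, pmap X (𝟙 P) = 𝟙 (obj X P)
  pmap_comp : ∀ (X : C) {P Q R : C} (p : P ⟶ Q) (q : Q ⟶ R),
      pmap X (p ≫ q) = pmap X p ≫ pmap X q
  /-- `#(id,p)` is a monad morphism: compatibility with units. -/
  pmap_η : ∀ (X : C) {P Q : C} (p : P ⟶ Q), η X P ≫ pmap X p = η X Q
  /-- `#(id,p)` is a monad morphism: compatibility with Kleisli lifting. -/
  pmap_bind : ∀ {X Y : C} {P Q : C} (p : P ⟶ Q) (f : X ⟶ obj Y P),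
      bind P f ≫ pmap Y p = pmap X p ≫ bind Q (f ≫ pmap Y p)
  /-- Guardedness on the Kleisli category of `#(-,P)`. -/
  guarded : ∀ {X Y' Y'' Y : C} (P : C), (X ⟶ obj Y P) → (Y' ⟶ Y) → (Y'' ⟶ Y) → Prop
  trv : ∀ (W : C) {X Y Z V : C} (i₁ : Y ⟶ V) (i₂ : Z ⟶ V), IsCoprodCospan i₁ i₂ →
      ∀ f : X ⟶ obj Y W, guarded W (f ≫ bind W (i₁ ≫ η V W)) i₂ i₁
  par : ∀ (W : C) {X Y V Z' Z'' Z : C} (j₁ : X ⟶ V) (j₂ : Y ⟶ V), IsCoprodCospan j₁ j₂ →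
      ∀ (σ : Z' ⟶ Z) (σ' : Z'' ⟶ Z) (u : V ⟶ obj Z W),
      guarded W (j₁ ≫ u) σ σ' → guarded W (j₂ ≫ u) σ σ' → guarded W u σ σ'
  cmp : ∀ (W : C) {X Y Z V U' U'' U : C} (i₁ : Y ⟶ V) (i₂ : Z ⟶ V), IsCoprodCospan i₁ i₂ →
      ∀ (σ : U' ⟶ U) (σ' : U'' ⟶ U) (f : X ⟶ obj V W) (u : V ⟶ obj U W),
      guarded W f i₂ i₁ → guarded W (i₁ ≫ u) σ σ' → guarded W (f ≫ bind W u) σ σ'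
  /-- `#(id,p)` is a guarded monad morphism. -/
  pmap_guarded : ∀ {P Q : C} (p : P ⟶ Q) {X Y' Y'' Y : C} (f : X ⟶ obj Y P)
      (σ : Y' ⟶ Y) (σ' : Y'' ⟶ Y),
      guarded P f σ σ' → guarded Q (f ≫ pmap Y p) σ σ'

namespace PGMonad

variable {C : Type u} [Category.{v} C] (H : PGMonad C)

def IsFinalCoalgebra (F : C → C) (out : ∀ X : C, F X ⟶ H.obj X (F X)) : Prop :=
  ∀ (X A : C) (c : A ⟶ H.obj X A), ∃! h : A ⟶ F X, h ≫ out X = c ≫ H.pmap X h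

theorem guarded_comp_of_par {P X Y V A Z' Z'' Z : C} {j₁ : X ⟶ V} {j₂ : Y ⟶ V}
    (hj : IsCoprodCospan j₁ j₂) {σ : Z' ⟶ Z} {σ' : Z'' ⟶ Z} {u : V ⟶ A} {k : A ⟶ H.obj Z P}
    (h₁ : H.guarded P ((j₁ ≫ u) ≫ k) σ σ') (h₂ : H.guarded P ((j₂ ≫ u) ≫ k) σ σ') :
    H.guarded P (u ≫ k) σ σ' := by
  rw [Category.assoc] at h₁ h₂
  exact H.par P j₁ j₂ hj σ σ' _ h₁ h₂

section Coproducts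

variable [HasBinaryCoproducts C]

def IsSolution (P : C) {X Y : C} (f : X ⟶ H.obj (Y ⨿ X) P) (s : X ⟶ H.obj Y P) : Prop :=
  s = f ≫ H.bind P (coprod.desc (H.η Y P) s)

def IsGuardedIterative : Prop :=
  ∀ (P X Y : C) (f : X ⟶ H.obj (Y ⨿ X) P),
    H.guarded P f (coprod.inr : X ⟶ Y ⨿ X) coprod.inl → ∃! s, H.IsSolution P f s

/-- The coalgebra `[f̂, #(Y, inr) ∘ out]`, whose coiteration is `[f*, id]`. -/
noncomputable def bindCoalg {F : C → C} (out : ∀ X : C, F X ⟶ H.obj X (F X)) {X Y : C}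
    (f : X ⟶ F Y) : F X ⨿ F Y ⟶ H.obj Y (F X ⨿ F Y) :=
  coprod.desc
    (out X ≫ H.pmap X coprod.inl ≫ H.bind (F X ⨿ F Y) (f ≫ out Y ≫ H.pmap Y coprod.inr))
    (out Y ≫ H.pmap Y coprod.inr)

variable {H}

theorem bind_desc_η_comp_pmap {P Q X Y : C} (s : X ⟶ H.obj Y P) (p : P ⟶ Q) :
    H.bind P (coprod.desc (H.η Y P) s) ≫ H.pmap Y p =
      H.pmap (Y ⨿ X) p ≫ H.bind Q (coprod.desc (H.η Y Q) (s ≫ H.pmap Y p)) := by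
  rw [H.pmap_bind, coprod.desc_comp, H.pmap_η]

theorem IsSolution.pmap {P Q X Y : C} {f : X ⟶ H.obj (Y ⨿ X) P} {s : X ⟶ H.obj Y P}
    (hs : H.IsSolution P f s) (p : P ⟶ Q) :
    H.IsSolution Q (f ≫ H.pmap (Y ⨿ X) p) (s ≫ H.pmap Y p) := by
  unfold IsSolution at hs ⊢
  conv_lhs => rw [hs]
  rw [Category.assoc, bind_desc_η_comp_pmap, Category.assoc]

end Coproducts

namespace IsFinalCoalgebra

variable {H} {F : C → C} {out : ∀ X : C, F X ⟶ H.obj X (F X)}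
  (hF : H.IsFinalCoalgebra F out)

noncomputable def coiter {X A : C} (c : A ⟶ H.obj X A) : A ⟶ F X :=
  (hF X A c).choose

theorem coiter_out {X A : C} (c : A ⟶ H.obj X A) :
    hF.coiter c ≫ out X = c ≫ H.pmap X (hF.coiter c) :=
  (hF X A c).choose_spec.1

theorem eq_coiter {X A : C} {c : A ⟶ H.obj X A} {h : A ⟶ F X}
    (e : h ≫ out X = c ≫ H.pmap X h) : h = hF.coiter c :=
  (hF X A c).unique e (hF.coiter_out c)

theorem eq_id_of_out (hF : H.IsFinalCoalgebra F out) {X : C} {g : F X ⟶ F X}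
    (e : g ≫ out X = out X ≫ H.pmap X g) : g = 𝟙 (F X) :=
  (hF.eq_coiter e).trans (hF.eq_coiter (by rw [H.pmap_id]; simp)).symm

theorem out_comp_coiter_pmap_out (X : C) :
    out X ≫ hF.coiter (H.pmap X (out X)) = 𝟙 (F X) :=
  hF.eq_id_of_out <| by
    rw [Category.assoc, coiter_out, H.pmap_comp]

theorem mono_out (hF : H.IsFinalCoalgebra F out) (X : C) : Mono (out X) :=
  have : IsSplitMono (out X) := .mk' ⟨_, hF.out_comp_coiter_pmap_out X⟩
  inferInstance

noncomputable def unit (X : C) : X ⟶ F X :=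
  hF.coiter (H.η X X)

theorem unit_out (X : C) : hF.unit X ≫ out X = H.η X (F X) := by
  rw [unit, coiter_out, H.pmap_η]

section Bind

variable [HasBinaryCoproducts C]

noncomputable def bind {X Y : C} (f : X ⟶ F Y) : F X ⟶ F Y :=
  coprod.inl ≫ hF.coiter (H.bindCoalg out f)

theorem bindCoalg_comp_pmap_desc {X Y : C} (f : X ⟶ F Y) (h : F X ⟶ F Y) :
    H.bindCoalg out f ≫ H.pmap Y (coprod.desc h (𝟙 (F Y))) =
      coprod.desc (out X ≫ H.pmap X h ≫ H.bind (F Y) (f ≫ out Y)) (out Y) := by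
  have inr_desc : H.pmap Y coprod.inr ≫ H.pmap Y (coprod.desc h (𝟙 (F Y))) = 𝟙 _ := by
    rw [← H.pmap_comp, coprod.inr_desc, H.pmap_id]
  rw [bindCoalg, coprod.desc_comp]
  congr 1
  · simp only [Category.assoc, H.pmap_bind, inr_desc, Category.comp_id]
    rw [← Category.assoc (H.pmap X _), ← H.pmap_comp, coprod.inl_desc]
  · rw [Category.assoc, inr_desc, Category.comp_id]

theorem coiter_bindCoalg {X Y : C} (f : X ⟶ F Y) :
    hF.coiter (H.bindCoalg out f) = coprod.desc (hF.bind f) (𝟙 (F Y)) := by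
  have inr_coiter : coprod.inr ≫ hF.coiter (H.bindCoalg out f) = 𝟙 (F Y) :=
    hF.eq_id_of_out <| by
      rw [Category.assoc, coiter_out, bindCoalg, coprod.inr_desc_assoc, Category.assoc,
        ← H.pmap_comp]
  ext
  · rw [coprod.inl_desc, bind]
  · rw [coprod.inr_desc, inr_coiter]

theorem bind_out {X Y : C} (f : X ⟶ F Y) :
    hF.bind f ≫ out Y = out X ≫ H.pmap X (hF.bind f) ≫ H.bind (F Y) (f ≫ out Y) := by
  conv_lhs => rw [bind, Category.assoc, coiter_out, coiter_bindCoalg]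
  rw [bindCoalg_comp_pmap_desc, coprod.inl_desc]

theorem eq_bind_of_out {X Y : C} {f : X ⟶ F Y} {h : F X ⟶ F Y}
    (e : h ≫ out Y = out X ≫ H.pmap X h ≫ H.bind (F Y) (f ≫ out Y)) :
    h = hF.bind f := by
  have desc_eq : coprod.desc h (𝟙 (F Y)) = hF.coiter (H.bindCoalg out f) := by
    refine hF.eq_coiter ?_
    rw [bindCoalg_comp_pmap_desc, coprod.desc_comp, e, Category.id_comp]
  rw [← coprod.inl_desc h (𝟙 (F Y)), desc_eq, bind]

theorem comp_bind_out {W X Y : C} (f : W ⟶ F X) (g : X ⟶ F Y) :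
    (f ≫ hF.bind g) ≫ out Y =
      (f ≫ out X ≫ H.pmap X (hF.bind g)) ≫ H.bind (F Y) (g ≫ out Y) := by
  simp only [Category.assoc, bind_out]

theorem unit_bind {X Y : C} (f : X ⟶ F Y) : hF.unit X ≫ hF.bind f = f :=
  (hF.mono_out Y).right_cancellation _ _ <| by
    rw [comp_bind_out, ← Category.assoc, unit_out, H.pmap_η, H.η_bind]

theorem bind_unit (X : C) : hF.bind (hF.unit X) = 𝟙 (F X) :=
  (hF.eq_bind_of_out (by rw [unit_out, H.bind_η, H.pmap_id]; simp)).symm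

theorem bind_bind {X Y Z : C} (f : X ⟶ F Y) (g : Y ⟶ F Z) :
    hF.bind (f ≫ hF.bind g) = hF.bind f ≫ hF.bind g := by
  refine (hF.eq_bind_of_out ?_).symm
  rw [comp_bind_out, comp_bind_out, ← Category.assoc (hF.bind f), bind_out, H.pmap_comp]
  simp only [Category.assoc]
  rw [← Category.assoc (H.bind (F Y) _) (H.pmap Y _), H.pmap_bind]
  simp only [Category.assoc, ← H.bind_comp]

theorem guarded_trv {X Y Z V : C} {i₁ : Y ⟶ V} {i₂ : Z ⟶ V} (hi : IsCoprodCospan i₁ i₂)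
    (f : X ⟶ F Y) :
    H.guarded (F V) ((f ≫ hF.bind (i₁ ≫ hF.unit V)) ≫ out V) i₂ i₁ := by
  have := H.trv (F V) i₁ i₂ hi (f ≫ out Y ≫ H.pmap Y (hF.bind (i₁ ≫ hF.unit V)))
  rwa [comp_bind_out, Category.assoc i₁, unit_out]

theorem guarded_cmp {X Y Z V W' W'' W : C} {i₁ : Y ⟶ V} {i₂ : Z ⟶ V}
    (hi : IsCoprodCospan i₁ i₂) {σ : W' ⟶ W} {σ' : W'' ⟶ W} {f : X ⟶ F V} {u : V ⟶ F W}
    (hf : H.guarded (F V) (f ≫ out V) i₂ i₁) (hu : H.guarded (F W) ((i₁ ≫ u) ≫ out W) σ σ') :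
    H.guarded (F W) ((f ≫ hF.bind u) ≫ out W) σ σ' := by
  rw [Category.assoc] at hu
  rw [comp_bind_out, ← Category.assoc f]
  exact H.cmp (F W) i₁ i₂ hi σ σ' _ _ (H.pmap_guarded _ _ _ _ hf) hu

theorem desc_unit_out {X Y : C} (s : X ⟶ F Y) :
    coprod.desc (hF.unit Y) s ≫ out Y = coprod.desc (H.η Y (F Y)) (s ≫ out Y) := by
  rw [coprod.desc_comp, unit_out]

theorem isSolution_out {X Y : C} {f : X ⟶ F (Y ⨿ X)} {s : X ⟶ F Y}
    (hs : s = f ≫ hF.bind (coprod.desc (hF.unit Y) s)) :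
    H.IsSolution (F Y)
      ((f ≫ out (Y ⨿ X)) ≫ H.pmap (Y ⨿ X) (hF.bind (coprod.desc (hF.unit Y) s)))
      (s ≫ out Y) := by
  unfold IsSolution
  conv_lhs => rw [hs]
  rw [comp_bind_out, desc_unit_out]
  simp only [Category.assoc]

theorem isCoalgHom_iff_eq_bind {X Y : C} (s₀ : X ⟶ H.obj Y (F (Y ⨿ X)))
    {h : F (Y ⨿ X) ⟶ F Y} {t : X ⟶ F Y} (ht : t ≫ out Y = s₀ ≫ H.pmap Y h) :
    h ≫ out Y = (out (Y ⨿ X) ≫ H.bind _ (coprod.desc (H.η Y _) s₀)) ≫ H.pmap Y h ↔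
      h = hF.bind (coprod.desc (hF.unit Y) t) := by
  rw [Category.assoc, bind_desc_η_comp_pmap, ← ht, ← desc_unit_out]
  refine ⟨hF.eq_bind_of_out, fun e => ?_⟩
  subst e
  exact hF.bind_out _

theorem existsUnique_solution (hiter : H.IsGuardedIterative) {X Y : C} (f : X ⟶ F (Y ⨿ X))
    (hf : H.guarded (F (Y ⨿ X)) (f ≫ out (Y ⨿ X)) (coprod.inr : X ⟶ Y ⨿ X) coprod.inl) :
    ∃! s : X ⟶ F Y, s = f ≫ hF.bind (coprod.desc (hF.unit Y) s) := by
  obtain ⟨s₀, hs₀, -⟩ := hiter _ X Y (f ≫ out (Y ⨿ X)) hf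
  set d := out (Y ⨿ X) ≫ H.bind _ (coprod.desc (H.η Y _) s₀)
  have comp_out_of_isCoalgHom (h : F (Y ⨿ X) ⟶ F Y) (hh : h ≫ out Y = d ≫ H.pmap Y h) :
      (f ≫ h) ≫ out Y = s₀ ≫ H.pmap Y h :=
    calc (f ≫ h) ≫ out Y = ((f ≫ out _) ≫ H.pmap _ h) ≫
          H.bind _ (coprod.desc (H.η Y _) (s₀ ≫ H.pmap Y h)) := by
          rw [Category.assoc, hh]
          simp only [d, Category.assoc, bind_desc_η_comp_pmap]
      _ = s₀ ≫ H.pmap Y h := (hs₀.pmap h).symm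
  refine ⟨f ≫ hF.coiter d, ?_, fun s hs => ?_⟩
  · have hcoiter := hF.coiter_out d
    exact congrArg (f ≫ ·)
      ((hF.isCoalgHom_iff_eq_bind s₀ (comp_out_of_isCoalgHom _ hcoiter)).1 hcoiter)
  · obtain ⟨_, -, uniq⟩ := hiter _ X Y
      ((f ≫ out _) ≫ H.pmap _ (hF.bind (coprod.desc (hF.unit Y) s))) (H.pmap_guarded _ _ _ _ hf)
    have ht : s ≫ out Y = s₀ ≫ H.pmap Y (hF.bind (coprod.desc (hF.unit Y) s)) :=
      (uniq _ (hF.isSolution_out hs)).trans (uniq _ (hs₀.pmap _)).symm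
    exact hs.trans (congrArg (f ≫ ·) (hF.eq_coiter ((hF.isCoalgHom_iff_eq_bind s₀ ht).2 rfl)))

end Bind

end IsFinalCoalgebra

end PGMonad

theorem parametrized_monad_coalgebraic_resumption {C : Type u} [Category.{v} C]
    [HasBinaryCoproducts C] (H : PGMonad C)
    -- the final coalgebras `F# X = νγ. #(X,γ)`:
    (Fobj : C → C) (out : ∀ X : C, Fobj X ⟶ H.obj X (Fobj X))
    (hfinal : ∀ (X A : C) (c : A ⟶ H.obj X A),
      ∃! h : A ⟶ Fobj X, h ≫ out X = c ≫ H.pmap X h) :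
    -- `F#` carries a monad structure determined by finality:
    ∃ (ην : ∀ X : C, X ⟶ Fobj X)
      (bindν : ∀ (X Y : C), (X ⟶ Fobj Y) → (Fobj X ⟶ Fobj Y)),
      -- the monad laws:
      (∀ (X Y : C) (f : X ⟶ Fobj Y), ην X ≫ bindν X Y f = f) ∧
      (∀ X : C, bindν X X (ην X) = 𝟙 (Fobj X)) ∧
      (∀ (X Y Z : C) (f : X ⟶ Fobj Y) (g : Y ⟶ Fobj Z),
        bindν X Z (f ≫ bindν Y Z g) = bindν X Y f ≫ bindν Y Z g) ∧
      -- the coinductive characterization of the unit and of the Kleisli lifting: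
      (∀ X : C, ην X ≫ out X = H.η X (Fobj X)) ∧
      (∀ (X Y : C) (f : X ⟶ Fobj Y),
        bindν X Y f ≫ out Y =
          out X ≫ H.pmap X (bindν X Y f) ≫ H.bind (Fobj Y) (f ≫ out Y)) ∧
      -- `F#` is a guarded monad, where `f : X ⟶ F# Y` is `σ`-guarded iff `out ∘ f` is:
      -- (trv)
      (∀ (X Y Z V : C) (i₁ : Y ⟶ V) (i₂ : Z ⟶ V), IsCoprodCospan i₁ i₂ →
        ∀ f : X ⟶ Fobj Y,
          H.guarded (Fobj V) ((f ≫ bindν Y V (i₁ ≫ ην V)) ≫ out V) i₂ i₁) ∧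
      -- (par)
      (∀ (X Y V Z' Z'' Z : C) (j₁ : X ⟶ V) (j₂ : Y ⟶ V), IsCoprodCospan j₁ j₂ →
        ∀ (σ : Z' ⟶ Z) (σ' : Z'' ⟶ Z) (u : V ⟶ Fobj Z),
          H.guarded (Fobj Z) ((j₁ ≫ u) ≫ out Z) σ σ' →
          H.guarded (Fobj Z) ((j₂ ≫ u) ≫ out Z) σ σ' →
          H.guarded (Fobj Z) (u ≫ out Z) σ σ') ∧
      -- (cmp)
      (∀ (X Y Z V W' W'' W : C) (i₁ : Y ⟶ V) (i₂ : Z ⟶ V), IsCoprodCospan i₁ i₂ →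
        ∀ (σ : W' ⟶ W) (σ' : W'' ⟶ W) (f : X ⟶ Fobj V) (u : V ⟶ Fobj W),
          H.guarded (Fobj V) (f ≫ out V) i₂ i₁ →
          H.guarded (Fobj W) ((i₁ ≫ u) ≫ out W) σ σ' →
          H.guarded (Fobj W) ((f ≫ bindν V W u) ≫ out W) σ σ') ∧
      -- if each `#(-,P)` is guarded iterative, then so is `F#`:
      ((∀ (P X Y : C) (f : X ⟶ H.obj (Y ⨿ X) P),
          H.guarded P f (coprod.inr : X ⟶ Y ⨿ X) coprod.inl →
          ∃! s : X ⟶ H.obj Y P, s = f ≫ H.bind P (coprod.desc (H.η Y P) s)) →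
        ∀ (X Y : C) (f : X ⟶ Fobj (Y ⨿ X)),
          H.guarded (Fobj (Y ⨿ X)) (f ≫ out (Y ⨿ X))
            (coprod.inr : X ⟶ Y ⨿ X) coprod.inl →
          ∃! s : X ⟶ Fobj Y, s = f ≫ bindν (Y ⨿ X) Y (coprod.desc (ην Y) s)) := by
  have hF : H.IsFinalCoalgebra Fobj out := hfinal
  exact ⟨hF.unit, fun _ _ => hF.bind, fun _ _ => hF.unit_bind, hF.bind_unit,
    fun _ _ _ => hF.bind_bind, hF.unit_out, fun _ _ => hF.bind_out,
    fun _ _ _ _ _ _ hi => hF.guarded_trv hi,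
    fun _ _ _ _ _ _ _ _ hj _ _ _ => H.guarded_comp_of_par hj,
    fun _ _ _ _ _ _ _ _ _ hi _ _ _ _ => hF.guarded_cmp hi,
    fun hiter _ _ => hF.existsUnique_solution hiter⟩
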